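/- arXiv:math/0310365 — 2 statements merged into one kernel-verified Lean document; each statement's English description precedes it below -/
import Mathlib

section
/- Let x : [0,π] → ℝ³ be a C² unit-speed curve with |x''| ≤ 1, and suppose the Schur chord bound |x(θ) − x(0)| ≥ √(2 − 2cos θ) holds for θ ∈ (0,π]. Then for all θ ∈ (0,π], |⟨x'(0) × x'(θ), x(0) − x(θ)⟩| / |x(0) − x(θ)|³ ≤ (π/4)·(π/2)², and consequently ∫₀^π |⟨x'(0) × x'(θ), x(0) − x(θ)⟩| / |x(0) − x(θ)|³ dθ ≤ π·(π/4)·(π/2)². -/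
open MeasureTheory Real Set

/-- Scalar triple product `⟨u × v, w⟩` of three vectors in `ℝ³`. -/
noncomputable def tripleProduct (u v w : EuclideanSpace ℝ (Fin 3)) : ℝ :=
  (u 1 * v 2 - u 2 * v 1) * w 0 + (u 2 * v 0 - u 0 * v 2) * w 1
    + (u 0 * v 1 - u 1 * v 0) * w 2

lemma tripleProduct_shear (u v w : EuclideanSpace ℝ (Fin 3)) (t : ℝ) :
    tripleProduct u v w = tripleProduct u (v - u) (w + t • u) := by
  simp only [tripleProduct, PiLp.sub_apply, PiLp.add_apply, PiLp.smul_apply, smul_eq_mul]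
  ring

lemma tripleProduct_le (u v w : EuclideanSpace ℝ (Fin 3)) :
    |tripleProduct u v w| ≤ ‖u‖ * ‖v‖ * ‖w‖ := by
  have hn : ∀ z : EuclideanSpace ℝ (Fin 3), ‖z‖ = Real.sqrt (z 0 ^ 2 + z 1 ^ 2 + z 2 ^ 2) := by
    intro z
    rw [EuclideanSpace.norm_eq]
    congr 1
    rw [Fin.sum_univ_three]
    simp [Real.norm_eq_abs, sq_abs]
  have hA : (0:ℝ) ≤ u 0 ^ 2 + u 1 ^ 2 + u 2 ^ 2 := by positivity
  have hB : (0:ℝ) ≤ v 0 ^ 2 + v 1 ^ 2 + v 2 ^ 2 := by positivity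
  have hC : (0:ℝ) ≤ w 0 ^ 2 + w 1 ^ 2 + w 2 ^ 2 := by positivity
  have hprod : ‖u‖ * ‖v‖ * ‖w‖ =
      Real.sqrt ((u 0 ^ 2 + u 1 ^ 2 + u 2 ^ 2) * (v 0 ^ 2 + v 1 ^ 2 + v 2 ^ 2)
        * (w 0 ^ 2 + w 1 ^ 2 + w 2 ^ 2)) := by
    rw [hn u, hn v, hn w, ← Real.sqrt_mul hA, ← Real.sqrt_mul (by positivity)]
  rw [hprod]
  have hsq : (tripleProduct u v w) ^ 2 ≤
      (u 0 ^ 2 + u 1 ^ 2 + u 2 ^ 2) * (v 0 ^ 2 + v 1 ^ 2 + v 2 ^ 2)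
        * (w 0 ^ 2 + w 1 ^ 2 + w 2 ^ 2) := by
    simp only [tripleProduct]
    nlinarith [sq_nonneg (u 0 * v 0 + u 1 * v 1 + u 2 * v 2),
      sq_nonneg ((u 1 * v 2 - u 2 * v 1) * w 1 - (u 2 * v 0 - u 0 * v 2) * w 0),
      sq_nonneg ((u 1 * v 2 - u 2 * v 1) * w 2 - (u 0 * v 1 - u 1 * v 0) * w 0),
      sq_nonneg ((u 2 * v 0 - u 0 * v 2) * w 2 - (u 0 * v 1 - u 1 * v 0) * w 1),
      sq_nonneg (u 0 * v 0 + u 1 * v 1 + u 2 * v 2)]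
  calc |tripleProduct u v w| = Real.sqrt ((tripleProduct u v w) ^ 2) := by
        rw [Real.sqrt_sq_eq_abs]
    _ ≤ _ := Real.sqrt_le_sqrt hsq

/-- Near-part bound: given the Schur chord bound, the crossing integrand is
pointwise at most `(π/4)(π/2)²` on `(0,π]`, and its integral over `[0,π]` is at
most `π·(π/4)·(π/2)²`. -/
theorem near_integrand_bound
    (x x' x'' : ℝ → EuclideanSpace ℝ (Fin 3))
    (hd1 : ∀ s ∈ Icc (0:ℝ) π, HasDerivWithinAt x (x' s) (Icc (0:ℝ) π) s)
    (hd2 : ∀ s ∈ Icc (0:ℝ) π, HasDerivWithinAt x' (x'' s) (Icc (0:ℝ) π) s)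
    (hcont : ContinuousOn x'' (Icc (0:ℝ) π))
    (hunit : ∀ s ∈ Icc (0:ℝ) π, ‖x' s‖ = 1)
    (hcurv : ∀ s ∈ Icc (0:ℝ) π, ‖x'' s‖ ≤ 1)
    (hschur : ∀ θ ∈ Ioc (0:ℝ) π, ‖x θ - x 0‖ ≥ Real.sqrt (2 - 2 * Real.cos θ)) :
    (∀ θ ∈ Ioc (0:ℝ) π,
        |tripleProduct (x' 0) (x' θ) (x 0 - x θ)| / ‖x 0 - x θ‖ ^ 3
          ≤ (π / 4) * (π / 2) ^ 2) ∧
    (∫ θ in (0:ℝ)..π,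
        |tripleProduct (x' 0) (x' θ) (x 0 - x θ)| / ‖x 0 - x θ‖ ^ 3)
      ≤ π * ((π / 4) * (π / 2) ^ 2) := by
  have hπ : (0:ℝ) ≤ π := pi_pos.le
  have h0mem : (0:ℝ) ∈ Icc (0:ℝ) π := ⟨le_refl 0, hπ⟩
  -- velocity increment bound
  have hA : ∀ s ∈ Icc (0:ℝ) π, ‖x' s - x' 0‖ ≤ s := by
    intro s hs
    have := Convex.norm_image_sub_le_of_norm_hasDerivWithin_le hd2 hcurv
      (convex_Icc 0 π) h0mem hs
    simpa [Real.norm_eq_abs, abs_of_nonneg hs.1] using this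
  have key : ∀ θ ∈ Ioc (0:ℝ) π,
      |tripleProduct (x' 0) (x' θ) (x 0 - x θ)| / ‖x 0 - x θ‖ ^ 3
        ≤ (π / 4) * (π / 2) ^ 2 := by
    intro θ hθ
    obtain ⟨hθ0, hθπ⟩ := hθ
    have hθmem : θ ∈ Icc (0:ℝ) π := ⟨hθ0.le, hθπ⟩
    -- Step B : ‖x 0 - x θ + θ • x' 0‖ ≤ θ^2/2
    have hxc : ContinuousOn x (Icc (0:ℝ) π) := fun s hs =>
      (hd1 s hs).continuousWithinAt
    have hBnd : ‖x 0 - x θ + θ • x' 0‖ ≤ θ ^ 2 / 2 := by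
      set g : ℝ → EuclideanSpace ℝ (Fin 3) := fun s => x s - s • x' 0 - x 0 with hg
      have hgc : ContinuousOn g (Icc (0:ℝ) θ) := by
        apply ContinuousOn.sub _ continuousOn_const
        apply ContinuousOn.sub
        · exact hxc.mono (Icc_subset_Icc le_rfl hθπ)
        · exact (continuousOn_id.smul continuousOn_const)
      have hgd : ∀ s ∈ Ico (0:ℝ) θ, HasDerivWithinAt g (x' s - x' 0) (Ici s) s := by
        intro s hs
        have hsmem : s ∈ Icc (0:ℝ) π := ⟨hs.1, (hs.2.trans_le hθπ).le⟩
        have hnhds : Icc (0:ℝ) π ∈ nhdsWithin s (Ici s) := by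
          refine mem_nhdsWithin.2 ⟨Iio π, isOpen_Iio, hs.2.trans_le hθπ, ?_⟩
          rintro t ⟨ht1, ht2⟩
          exact ⟨hs.1.trans ht2, ht1.le⟩
        have h1 : HasDerivWithinAt x (x' s) (Ici s) s :=
          (hd1 s hsmem).mono_of_mem_nhdsWithin hnhds
        have h2 : HasDerivWithinAt (fun s : ℝ => s • x' 0) ((1:ℝ) • x' 0) (Ici s) s :=
          ((hasDerivAt_id s).smul_const (x' 0)).hasDerivWithinAt
        have := (h1.sub h2).sub_const (x 0)
        simpa [one_smul, hg] using this
      have hBder : ∀ s : ℝ, HasDerivAt (fun s : ℝ => s ^ 2 / 2) s s := by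
        intro s
        have := (hasDerivAt_pow 2 s).div_const 2
        simpa using this
      have hgval : ∀ t ∈ Icc (0:ℝ) θ, ‖g t‖ ≤ t ^ 2 / 2 := by
        apply image_norm_le_of_norm_deriv_right_le_deriv_boundary hgc hgd _ hBder
        · intro s hs
          exact hA s ⟨hs.1, (hs.2.trans_le hθπ).le⟩
        · simp [hg]
      have := hgval θ ⟨hθ0.le, le_rfl⟩
      have hid : g θ = -(x 0 - x θ + θ • x' 0) := by
        simp [hg]; abel
      rwa [hid, norm_neg] at this
    -- chord bounds
    have hcos : Real.cos θ < 1 := by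
      have := Real.strictAntiOn_cos h0mem hθmem hθ0
      simpa using this
    have hs0pos : 0 < Real.sqrt (2 - 2 * Real.cos θ) :=
      Real.sqrt_pos.2 (by linarith)
    have hD : Real.sqrt (2 - 2 * Real.cos θ) ≤ ‖x 0 - x θ‖ := by
      rw [norm_sub_rev]; exact hschur θ ⟨hθ0, hθπ⟩
    have hDpos : 0 < ‖x 0 - x θ‖ := lt_of_lt_of_le hs0pos hD
    -- Jordan: θ ≤ (π/2) * sqrt(2-2cosθ)
    have hsin : Real.sqrt (2 - 2 * Real.cos θ) = 2 * Real.sin (θ / 2) := by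
      have hc : Real.cos θ = 2 * Real.cos (θ / 2) ^ 2 - 1 := by
        rw [← Real.cos_two_mul]; congr 1; ring
      have hpyth := Real.sin_sq_add_cos_sq (θ / 2)
      have h4 : 2 - 2 * Real.cos θ = (2 * Real.sin (θ / 2)) ^ 2 := by nlinarith
      rw [h4, Real.sqrt_sq]
      have : 0 ≤ Real.sin (θ / 2) :=
        Real.sin_nonneg_of_nonneg_of_le_pi (by linarith) (by linarith)
      linarith
    have hjordan : θ ≤ (π / 2) * Real.sqrt (2 - 2 * Real.cos θ) := by
      have := Real.mul_le_sin (x := θ / 2) (by linarith) (by linarith)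
      rw [hsin]
      have hπpos := Real.pi_pos
      rw [div_mul_eq_mul_div, div_le_iff₀ hπpos] at this
      calc θ ≤ Real.sin (θ / 2) * π * 2 / 2 := by linarith
        _ = π / 2 * (2 * Real.sin (θ / 2)) := by ring
    have hθD : θ ≤ (π / 2) * ‖x 0 - x θ‖ := by
      calc θ ≤ (π / 2) * Real.sqrt (2 - 2 * Real.cos θ) := hjordan
        _ ≤ (π / 2) * ‖x 0 - x θ‖ := by
            apply mul_le_mul_of_nonneg_left hD (by positivity)
    -- triple product bound
    have hT : |tripleProduct (x' 0) (x' θ) (x 0 - x θ)| ≤ θ ^ 3 / 2 := by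
      rw [tripleProduct_shear (x' 0) (x' θ) (x 0 - x θ) θ]
      calc |tripleProduct (x' 0) (x' θ - x' 0) (x 0 - x θ + θ • x' 0)|
          ≤ ‖x' 0‖ * ‖x' θ - x' 0‖ * ‖x 0 - x θ + θ • x' 0‖ := tripleProduct_le _ _ _
        _ ≤ 1 * θ * (θ ^ 2 / 2) := by
            apply mul_le_mul _ hBnd (norm_nonneg _) (by positivity)
            apply mul_le_mul (le_of_eq (hunit 0 h0mem)) (hA θ hθmem) (norm_nonneg _)
              (by norm_num)
        _ = θ ^ 3 / 2 := by ring
    -- assemble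
    rw [div_le_iff₀ (by positivity)]
    calc |tripleProduct (x' 0) (x' θ) (x 0 - x θ)| ≤ θ ^ 3 / 2 := hT
      _ ≤ ((π / 2) * ‖x 0 - x θ‖) ^ 3 / 2 := by
          have := pow_le_pow_left₀ hθ0.le hθD 3
          linarith
      _ = (π / 4) * (π / 2) ^ 2 * ‖x 0 - x θ‖ ^ 3 := by ring
  refine ⟨key, ?_⟩
  have hnonneg : ∀ θ, 0 ≤ |tripleProduct (x' 0) (x' θ) (x 0 - x θ)| / ‖x 0 - x θ‖ ^ 3 :=
    fun θ => div_nonneg (abs_nonneg _) (by positivity)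
  calc (∫ θ in (0:ℝ)..π,
          |tripleProduct (x' 0) (x' θ) (x 0 - x θ)| / ‖x 0 - x θ‖ ^ 3)
      ≤ ‖∫ θ in (0:ℝ)..π,
          |tripleProduct (x' 0) (x' θ) (x 0 - x θ)| / ‖x 0 - x θ‖ ^ 3‖ := le_abs_self _
    _ ≤ (π / 4) * (π / 2) ^ 2 * |π - 0| := by
        apply intervalIntegral.norm_integral_le_of_norm_le_const
        intro θ hθ
        rw [uIoc_of_le hπ] at hθ
        rw [Real.norm_eq_abs, abs_of_nonneg (hnonneg θ)]
        exact key θ hθ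
    _ = π * ((π / 4) * (π / 2) ^ 2) := by
        rw [sub_zero, abs_of_nonneg hπ]; ring
end

section
/- Let K be a C² closed unit-speed curve in ℝ³ of length L with thickness radius R(K) = 1 and total curvature κ. Suppose (i) ∫_{arc(x,y)≤π} |⟨T_x, T_y, x−y⟩|/|x−y|³ dy ≤ b₁ for every x ∈ K (near bound), and (ii) ∫_{arc(x,y)≥π} 1/|x−y|² dy ≤ c₁ + c₂κ for every x ∈ K (far/illumination bound), with b₁ = (2π)(π/4)(π/2)², c₁ = 16, c₂ = 43. Then the average crossing number acn(K) = (1/4π)∬_{K×K} |⟨T_x, T_y, x−y⟩|/|x−y|³ satisfies acn(K) ≤ (1/4π)(c₂ + b₁/(2π) + c₁/(2π))·L·κ. -/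
open MeasureTheory Real Set

open scoped RealInnerProductSpace

lemma arcsin_le_add_cube {y : ℝ} (h0 : 0 ≤ y) (h1 : y ≤ 1/2) :
    Real.arcsin y ≤ y + y ^ 3 := by
  set φ : ℝ → ℝ := fun z => z + z ^ 3 - Real.arcsin z with hφ
  have hmono : MonotoneOn φ (Icc (0:ℝ) (1/2)) := by
    apply monotoneOn_of_deriv_nonneg (convex_Icc _ _)
    · exact ((continuous_id.add (continuous_pow 3)).sub Real.continuous_arcsin).continuousOn
    · intro z hz
      rw [interior_Icc] at hz
      have hz1 : z ≠ -1 := by intro h; rw [h] at hz; exact absurd hz.1 (by norm_num)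
      have hz2 : z ≠ 1 := by intro h; rw [h] at hz; exact absurd hz.2 (by norm_num)
      exact ((hasDerivAt_id z).add (hasDerivAt_pow 3 z)).sub
        (Real.hasDerivAt_arcsin hz1 hz2) |>.differentiableAt.differentiableWithinAt
    · intro z hz
      rw [interior_Icc] at hz
      have hz1 : z ≠ -1 := by intro h; rw [h] at hz; exact absurd hz.1 (by norm_num)
      have hz2 : z ≠ 1 := by intro h; rw [h] at hz; exact absurd hz.2 (by norm_num)
      have hd : deriv φ z = 1 + 3 * z ^ 2 - 1 / Real.sqrt (1 - z ^ 2) := by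
        have := ((hasDerivAt_id z).add (hasDerivAt_pow 3 z)).sub
          (Real.hasDerivAt_arcsin hz1 hz2)
        exact this.deriv.trans (by norm_num)
      rw [hd]
      have hzz : 0 < 1 - z ^ 2 := by nlinarith [hz.1, hz.2]
      have hs : 0 < Real.sqrt (1 - z ^ 2) := Real.sqrt_pos.2 hzz
      have hs2 : Real.sqrt (1 - z ^ 2) ^ 2 = 1 - z ^ 2 := Real.sq_sqrt hzz.le
      have key : 1 ≤ (1 + 3 * z ^ 2) * Real.sqrt (1 - z ^ 2) := by
        have hA : 0 ≤ (1 + 3 * z ^ 2) * Real.sqrt (1 - z ^ 2) := by positivity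
        have h2 : 1 ≤ ((1 + 3 * z ^ 2) * Real.sqrt (1 - z ^ 2)) ^ 2 := by
          have : ((1 + 3 * z ^ 2) * Real.sqrt (1 - z ^ 2)) ^ 2
              = (1 + 3 * z ^ 2) ^ 2 * (1 - z ^ 2) := by
            rw [mul_pow, hs2]
          rw [this]
          have hz2' : z ^ 2 ≤ 1 / 4 := by nlinarith [hz.1.le, hz.2.le]
          have hz4 : z ^ 4 ≤ 1 / 16 := by nlinarith [mul_le_mul hz2' hz2' (sq_nonneg z) (by norm_num : (0:ℝ) ≤ 1/4)]
          have hz6 : z ^ 2 * z ^ 4 ≤ z ^ 2 * (1 / 16) :=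
            mul_le_mul_of_nonneg_left hz4 (sq_nonneg z)
          nlinarith [sq_nonneg z, hz6, sq_nonneg (z ^ 2)]
        nlinarith [hA, h2]
      have : 1 / Real.sqrt (1 - z ^ 2) ≤ 1 + 3 * z ^ 2 := by
        rw [div_le_iff₀ hs]; linarith
      linarith
  have h00 : φ 0 ≤ φ y := hmono (by constructor <;> norm_num) ⟨h0, h1⟩ h0
  simp [hφ, Real.arcsin_zero] at h00
  linarith [h00]

lemma arccos_eq_two_arcsin {y : ℝ} (h0 : 0 ≤ y) (h1 : y ≤ 1) :
    Real.arccos (1 - 2 * y ^ 2) = 2 * Real.arcsin y := by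
  have hy : y ∈ Icc (-1:ℝ) 1 := ⟨by linarith, h1⟩
  have hcos : Real.cos (2 * Real.arcsin y) = 1 - 2 * y ^ 2 := by
    rw [Real.cos_two_mul, Real.cos_arcsin, Real.sq_sqrt (by nlinarith : (0:ℝ) ≤ 1 - y^2)]
    ring
  rw [← hcos]
  exact Real.arccos_cos (by have := Real.arcsin_nonneg.2 h0; linarith) (by linarith [Real.arcsin_le_pi_div_two y, Real.pi_pos])

section TriangleIneq
variable {E : Type*} [NormedAddCommGroup E] [InnerProductSpace ℝ E]

lemma arccos_inner_triangle (a b c : E) (ha : ‖a‖ = 1) (hb : ‖b‖ = 1) (hc : ‖c‖ = 1) :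
    Real.arccos ⟪a, c⟫ ≤ Real.arccos ⟪a, b⟫ + Real.arccos ⟪b, c⟫ := by
  have haa : ⟪a, a⟫ = 1 := by rw [real_inner_self_eq_norm_sq, ha]; norm_num
  have hbb : ⟪b, b⟫ = 1 := by rw [real_inner_self_eq_norm_sq, hb]; norm_num
  have hcc : ⟪c, c⟫ = 1 := by rw [real_inner_self_eq_norm_sq, hc]; norm_num
  have hα1 : |⟪a, b⟫| ≤ 1 := by simpa [ha, hb] using abs_real_inner_le_norm a b
  have hγ1 : |⟪b, c⟫| ≤ 1 := by simpa [hb, hc] using abs_real_inner_le_norm b c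
  have hac1 : |⟪a, c⟫| ≤ 1 := by simpa [ha, hc] using abs_real_inner_le_norm a c
  have hαl := abs_le.1 hα1
  have hγl := abs_le.1 hγ1
  have hacl := abs_le.1 hac1
  have hna : ‖a - ⟪a, b⟫ • b‖ = Real.sqrt (1 - ⟪a, b⟫ ^ 2) := by
    rw [norm_eq_sqrt_real_inner]
    congr 1
    rw [inner_sub_left, inner_sub_right, inner_sub_right, real_inner_smul_left,
      real_inner_smul_left, real_inner_smul_right, real_inner_smul_right,
      haa, hbb, real_inner_comm b a]
    ring
  have hnc : ‖c - ⟪b, c⟫ • b‖ = Real.sqrt (1 - ⟪b, c⟫ ^ 2) := by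
    rw [norm_eq_sqrt_real_inner]
    congr 1
    rw [inner_sub_left, inner_sub_right, inner_sub_right, real_inner_smul_left,
      real_inner_smul_left, real_inner_smul_right, real_inner_smul_right,
      hcc, hbb, real_inner_comm c b]
    ring
  have hinner : ⟪a - ⟪a, b⟫ • b, c - ⟪b, c⟫ • b⟫ = ⟪a, c⟫ - ⟪a, b⟫ * ⟪b, c⟫ := by
    rw [inner_sub_left, inner_sub_right, inner_sub_right, real_inner_smul_left,
      real_inner_smul_left, real_inner_smul_right, real_inner_smul_right, hbb]
    ring
  have hCS : |⟪a - ⟪a, b⟫ • b, c - ⟪b, c⟫ • b⟫|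
      ≤ Real.sqrt (1 - ⟪a, b⟫ ^ 2) * Real.sqrt (1 - ⟪b, c⟫ ^ 2) := by
    rw [← hna, ← hnc]
    exact abs_real_inner_le_norm _ _
  have hkey : Real.cos (Real.arccos ⟪a, b⟫ + Real.arccos ⟪b, c⟫) ≤ ⟪a, c⟫ := by
    rw [Real.cos_add, Real.cos_arccos hαl.1 hαl.2, Real.cos_arccos hγl.1 hγl.2,
      Real.sin_arccos, Real.sin_arccos]
    rw [hinner] at hCS
    have := neg_abs_le (⟪a, c⟫ - ⟪a, b⟫ * ⟪b, c⟫)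
    nlinarith [hCS, this]
  have hsum0 : 0 ≤ Real.arccos ⟪a, b⟫ + Real.arccos ⟪b, c⟫ :=
    add_nonneg (Real.arccos_nonneg _) (Real.arccos_nonneg _)
  by_cases hπ : Real.arccos ⟪a, b⟫ + Real.arccos ⟪b, c⟫ ≤ Real.pi
  · have h1 : Real.arccos ⟪a, c⟫
        ≤ Real.arccos (Real.cos (Real.arccos ⟪a, b⟫ + Real.arccos ⟪b, c⟫)) := by
      rcases eq_or_lt_of_le hkey with h | h
      · rw [h]
      · exact (Real.strictAntiOn_arccos ⟨Real.neg_one_le_cos _, Real.cos_le_one _⟩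
          ⟨hacl.1, hacl.2⟩ h).le
    rwa [Real.arccos_cos hsum0 hπ] at h1
  · exact le_trans (Real.arccos_le_pi _) (by linarith)

lemma abs_tripleProduct_le' (u v w : EuclideanSpace ℝ (Fin 3))
    (hu : ‖u‖ = 1) (hv : ‖v‖ = 1) :
    |(u 1 * v 2 - u 2 * v 1) * w 0 + (u 2 * v 0 - u 0 * v 2) * w 1
      + (u 0 * v 1 - u 1 * v 0) * w 2| ≤ ‖w‖ := by
  have hsq : ∀ z : EuclideanSpace ℝ (Fin 3), ‖z‖ ^ 2 = z 0 ^ 2 + z 1 ^ 2 + z 2 ^ 2 := by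
    intro z
    rw [EuclideanSpace.norm_eq, Real.sq_sqrt (by positivity)]
    simp [Fin.sum_univ_three, sq_abs]
  have hu2 : u 0 ^ 2 + u 1 ^ 2 + u 2 ^ 2 = 1 := by rw [← hsq u, hu]; norm_num
  have hv2 : v 0 ^ 2 + v 1 ^ 2 + v 2 ^ 2 = 1 := by rw [← hsq v, hv]; norm_num
  set t := (u 1 * v 2 - u 2 * v 1) * w 0 + (u 2 * v 0 - u 0 * v 2) * w 1
      + (u 0 * v 1 - u 1 * v 0) * w 2 with ht
  have hlag : (u 1 * v 2 - u 2 * v 1) ^ 2 + (u 2 * v 0 - u 0 * v 2) ^ 2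
      + (u 0 * v 1 - u 1 * v 0) ^ 2 ≤ 1 := by
    nlinarith [sq_nonneg (u 0 * v 0 + u 1 * v 1 + u 2 * v 2), hu2, hv2]
  have hCS : t ^ 2 ≤ ((u 1 * v 2 - u 2 * v 1) ^ 2 + (u 2 * v 0 - u 0 * v 2) ^ 2
      + (u 0 * v 1 - u 1 * v 0) ^ 2) * (w 0 ^ 2 + w 1 ^ 2 + w 2 ^ 2) := by
    rw [ht]
    nlinarith [sq_nonneg ((u 1 * v 2 - u 2 * v 1) * w 1 - (u 2 * v 0 - u 0 * v 2) * w 0),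
      sq_nonneg ((u 1 * v 2 - u 2 * v 1) * w 2 - (u 0 * v 1 - u 1 * v 0) * w 0),
      sq_nonneg ((u 2 * v 0 - u 0 * v 2) * w 2 - (u 0 * v 1 - u 1 * v 0) * w 1)]
  have hw2 : w 0 ^ 2 + w 1 ^ 2 + w 2 ^ 2 = ‖w‖ ^ 2 := (hsq w).symm
  have ht2 : t ^ 2 ≤ ‖w‖ ^ 2 := by
    rw [← hw2]
    calc t ^ 2 ≤ _ := hCS
    _ ≤ 1 * (w 0 ^ 2 + w 1 ^ 2 + w 2 ^ 2) := by
        apply mul_le_mul_of_nonneg_right hlag (by positivity)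
    _ = w 0 ^ 2 + w 1 ^ 2 + w 2 ^ 2 := one_mul _
  calc |t| = Real.sqrt (t ^ 2) := (Real.sqrt_sq_eq_abs t).symm
  _ ≤ Real.sqrt (‖w‖ ^ 2) := Real.sqrt_le_sqrt ht2
  _ = ‖w‖ := Real.sqrt_sq (norm_nonneg w)
end TriangleIneq

section Fenchel

variable (x x' x'' : ℝ → EuclideanSpace ℝ (Fin 3))

/-- One small step of the tangent indicatrix estimate. -/
lemma arccos_step
    (hd2 : ∀ s, HasDerivAt x' (x'' s) s) (hcont : Continuous x'')
    (hunit : ∀ s, ‖x' s‖ = 1) (hcurv : ∀ s, ‖x'' s‖ ≤ 1)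
    (a h : ℝ) (h0 : 0 ≤ h) (h1 : h ≤ 1) :
    Real.arccos ⟪x' a, x' (a + h)⟫ ≤ (∫ u in a..(a + h), ‖x'' u‖) + h ^ 3 := by
  have hint : ∀ c d : ℝ, IntervalIntegrable (fun u => ‖x'' u‖) volume c d :=
    fun c d => (hcont.norm).intervalIntegrable c d
  have hftc : ∫ u in a..(a + h), x'' u = x' (a + h) - x' a :=
    intervalIntegral.integral_eq_sub_of_hasDerivAt (fun t _ => hd2 t)
      (hcont.intervalIntegrable a (a + h))
  set c := ‖x' (a + h) - x' a‖ with hc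
  have hc0 : 0 ≤ c := norm_nonneg _
  have hcle : c ≤ ∫ u in a..(a + h), ‖x'' u‖ := by
    rw [hc, ← hftc]
    exact intervalIntegral.norm_integral_le_integral_norm (by linarith)
  have hIle : (∫ u in a..(a + h), ‖x'' u‖) ≤ h := by
    have := intervalIntegral.norm_integral_le_of_norm_le_const
      (a := a) (b := a + h) (C := 1) (f := fun u => ‖x'' u‖)
      (fun u _ => by simpa using hcurv u)
    rw [Real.norm_eq_abs] at this
    have h2 := le_of_abs_le this
    rw [show a + h - a = h by ring, abs_of_nonneg h0, one_mul] at h2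
    exact h2
  have hch : c ≤ h := hcle.trans hIle
  have hinner : ⟪x' a, x' (a + h)⟫ = 1 - 2 * (c / 2) ^ 2 := by
    have hns : ‖x' (a + h) - x' a‖ ^ 2
        = ‖x' (a + h)‖ ^ 2 - 2 * ⟪x' (a + h), x' a⟫ + ‖x' a‖ ^ 2 :=
      norm_sub_sq_real _ _
    rw [hunit, hunit] at hns
    rw [real_inner_comm, ← hc] at hns
    nlinarith [hns]
  rw [hinner, arccos_eq_two_arcsin (by linarith) (by linarith)]
  have harc : Real.arcsin (c / 2) ≤ c / 2 + (c / 2) ^ 3 :=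
    arcsin_le_add_cube (by linarith) (by linarith)
  nlinarith [harc, hcle, pow_le_pow_left₀ hc0 hch 3]

lemma arccos_le_integral
    (hd2 : ∀ s, HasDerivAt x' (x'' s) s) (hcont : Continuous x'')
    (hunit : ∀ s, ‖x' s‖ = 1) (hcurv : ∀ s, ‖x'' s‖ ≤ 1)
    (a b : ℝ) (hab : a ≤ b) :
    Real.arccos ⟪x' a, x' b⟫ ≤ ∫ u in a..b, ‖x'' u‖ := by
  have hint : ∀ c d : ℝ, IntervalIntegrable (fun u => ‖x'' u‖) volume c d :=
    fun c d => (hcont.norm).intervalIntegrable c d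
  have huone : ∀ s, ⟪x' s, x' s⟫ = 1 := by
    intro s
    rw [real_inner_self_eq_norm_sq, hunit]; norm_num
  -- the subdivision claim
  have claim : ∀ (h : ℝ), 0 ≤ h → h ≤ 1 → ∀ (k : ℕ) (a₀ : ℝ),
      Real.arccos ⟪x' a₀, x' (a₀ + k * h)⟫
        ≤ (∫ u in a₀..(a₀ + k * h), ‖x'' u‖) + k * h ^ 3 := by
    intro h h0 h1 k
    induction k with
    | zero => intro a₀; simp [huone, hunit]
    | succ k ih =>
      intro a₀
      have htri := arccos_inner_triangle (x' a₀) (x' (a₀ + k * h)) (x' (a₀ + (k+1) * h))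
        (hunit _) (hunit _) (hunit _)
      have hstep := arccos_step x' x'' hd2 hcont hunit hcurv (a₀ + k * h) h h0 h1
      have heq : a₀ + k * h + h = a₀ + (k + 1 : ℕ) * h := by push_cast; ring
      rw [heq] at hstep
      have hadd : (∫ u in a₀..(a₀ + k * h), ‖x'' u‖)
            + (∫ u in (a₀ + k * h)..(a₀ + (k+1:ℕ) * h), ‖x'' u‖)
          = ∫ u in a₀..(a₀ + (k+1:ℕ) * h), ‖x'' u‖ :=
        intervalIntegral.integral_add_adjacent_intervals (hint _ _) (hint _ _)
      have := ih a₀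
      push_cast at htri hstep hadd this ⊢
      linarith
  rcases eq_or_lt_of_le hab with rfl | hlt
  · simp [huone, hunit]
  apply le_of_forall_pos_le_add
  intro ε hε
  obtain ⟨n, hn⟩ := exists_nat_gt (max (b - a) (Real.sqrt ((b - a) ^ 3 / ε)))
  have hn1 : (b - a) < n := lt_of_le_of_lt (le_max_left _ _) hn
  have hn2 : Real.sqrt ((b - a) ^ 3 / ε) < n := lt_of_le_of_lt (le_max_right _ _) hn
  have hnpos : (0:ℝ) < n := lt_of_le_of_lt (Real.sqrt_nonneg _) hn2
  set h := (b - a) / n with hh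
  have h0 : 0 ≤ h := div_nonneg (by linarith) hnpos.le
  have h1 : h ≤ 1 := by
    rw [hh, div_le_one hnpos]; linarith
  have hsum : a + n * h = b := by
    rw [hh]; field_simp; ring
  have := claim h h0 h1 n a
  rw [hsum] at this
  have hbound : (n : ℝ) * h ^ 3 ≤ ε := by
    have h3nn : (0:ℝ) ≤ (b - a) ^ 3 := pow_nonneg (by linarith) 3
    have hq : (b - a) ^ 3 / ε < (n:ℝ) ^ 2 := by
      nlinarith [Real.sq_sqrt (div_nonneg h3nn hε.le), hn2, Real.sqrt_nonneg ((b - a) ^ 3 / ε)]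
    have hexp : (n : ℝ) * h ^ 3 = (b - a) ^ 3 / (n:ℝ) ^ 2 := by
      rw [hh]; field_simp
    rw [hexp, div_le_iff₀ (by positivity)]
    rw [div_lt_iff₀ hε] at hq
    nlinarith [hq]
  linarith
end Fenchel

section F2
variable (x x' x'' : ℝ → EuclideanSpace ℝ (Fin 3))

lemma fenchel (L : ℝ) (hL : 0 < L)
    (hperiodic : ∀ s, x (s + L) = x s)
    (hd1 : ∀ s, HasDerivAt x (x' s) s)
    (hd2 : ∀ s, HasDerivAt x' (x'' s) s)
    (hcont : Continuous x'')
    (hunit : ∀ s, ‖x' s‖ = 1)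
    (hcurv : ∀ s, ‖x'' s‖ ≤ 1) :
    2 * π ≤ ∫ u in (0:ℝ)..L, ‖x'' u‖ := by
  have hint : ∀ c d : ℝ, IntervalIntegrable (fun u => ‖x'' u‖) volume c d :=
    fun c d => (hcont.norm).intervalIntegrable c d
  have contx' : Continuous x' :=
    continuous_iff_continuousAt.2 fun t => (hd2 t).continuousAt
  have huone : ∀ s, ⟪x' s, x' s⟫ = 1 := by
    intro s; rw [real_inner_self_eq_norm_sq, hunit]; norm_num
  have hxL : x L = x 0 := by simpa using hperiodic 0
  have hx'L : x' L = x' 0 := by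
    have h1 : HasDerivAt (fun t => x (t + L)) (x' (0 + L)) 0 :=
      HasDerivAt.comp_add_const 0 L (hd1 (0 + L))
    have h2 : HasDerivAt x (x' (0 + L)) 0 := by
      have : (fun t => x (t + L)) = x := funext hperiodic
      rwa [this] at h1
    have := (hd1 0).unique h2
    rw [zero_add] at this
    exact this.symm
  set κ := ∫ u in (0:ℝ)..L, ‖x'' u‖ with hκ
  have κnn : 0 ≤ κ :=
    intervalIntegral.integral_nonneg hL.le (fun u _ => norm_nonneg _)
  set F : ℝ → ℝ := fun t => ∫ u in (0:ℝ)..t, ‖x'' u‖ with hF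
  have Fcont : Continuous F := intervalIntegral.continuous_primitive hint 0
  have F0 : F 0 = 0 := intervalIntegral.integral_same
  have FL : F L = κ := rfl
  -- choose the halfway point
  have hIVT : κ / 2 ∈ F '' Icc 0 L := by
    apply intermediate_value_Icc hL.le Fcont.continuousOn
    rw [F0, FL]
    constructor <;> linarith
  obtain ⟨t₁, ht₁, hFt₁⟩ := hIVT
  have lemA := arccos_le_integral x' x'' hd2 hcont hunit hcurv
  have hsplit : ∀ c d e : ℝ, (∫ u in c..d, ‖x'' u‖) + (∫ u in d..e, ‖x'' u‖)
      = ∫ u in c..e, ‖x'' u‖ :=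
    fun c d e => intervalIntegral.integral_add_adjacent_intervals (hint _ _) (hint _ _)
  set p := x' 0 with hp
  set q := x' t₁ with hq
  by_cases hpq : p + q = 0
  · -- antipodal case
    have hqq : q = -p := eq_neg_of_add_eq_zero_right hpq
    have : ⟪p, q⟫ = -1 := by rw [hqq, inner_neg_right, huone 0]
    have h1 := lemA 0 t₁ ht₁.1
    rw [this, Real.arccos_neg_one] at h1
    have hnn : 0 ≤ ∫ u in t₁..L, ‖x'' u‖ :=
      intervalIntegral.integral_nonneg ht₁.2 (fun u _ => norm_nonneg _)
    have hsp : F t₁ + (∫ u in t₁..L, ‖x'' u‖) = κ := hsplit 0 t₁ L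
    have hπ : π ≤ F t₁ := h1
    rw [hFt₁] at hsp hπ
    linarith
  · -- the midpoint direction
    have hnpq : ‖p + q‖ ≠ 0 := fun h => hpq (norm_eq_zero.1 h)
    have hnpq' : 0 < ‖p + q‖ := lt_of_le_of_ne (norm_nonneg _) (Ne.symm hnpq)
    set m := ‖p + q‖⁻¹ • (p + q) with hm
    have hpq2 : ‖p + q‖ ^ 2 = 2 + 2 * ⟪p, q⟫ := by
      rw [norm_add_sq_real, hunit, hunit]; ring
    have hsumpos : 0 < 1 + ⟪p, q⟫ := by nlinarith [hnpq', hpq2]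
    have hpm : 0 < ⟪p, m⟫ := by
      rw [hm, real_inner_smul_right, inner_add_right, huone 0]
      exact mul_pos (inv_pos.2 hnpq') (by linarith)
    have hqm : 0 < ⟪q, m⟫ := by
      rw [hm, real_inner_smul_right, inner_add_right, huone t₁, real_inner_comm p q]
      exact mul_pos (inv_pos.2 hnpq') (by linarith)
    -- step 1: the tangent cannot stay in the open hemisphere around m
    have step1 : ∃ t₂ ∈ Icc (0:ℝ) L, ⟪m, x' t₂⟫ ≤ 0 := by
      by_contra hcon
      push_neg at hcon
      have hpos : ∀ t ∈ Ioo (0:ℝ) L, 0 < ⟪m, x' t⟫ :=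
        fun t ht => hcon t ⟨ht.1.le, ht.2.le⟩
      have hcint : IntervalIntegrable (fun t => ⟪m, x' t⟫) volume 0 L :=
        (continuous_const.inner contx').intervalIntegrable 0 L
      have hforall : 0 < ∫ t in (0:ℝ)..L, ⟪m, x' t⟫ :=
        intervalIntegral.intervalIntegral_pos_of_pos_on hcint hpos hL
      have hder : ∀ t, HasDerivAt (fun u => ⟪m, x u⟫) ⟪m, x' t⟫ t := by
        intro t
        have := (hasDerivAt_const t m).inner ℝ (hd1 t)
        simpa using this
      have hzero : (∫ t in (0:ℝ)..L, ⟪m, x' t⟫) = ⟪m, x L⟫ - ⟪m, x 0⟫ :=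
        intervalIntegral.integral_eq_sub_of_hasDerivAt (fun t _ => hder t) hcint
      rw [hxL, sub_self] at hzero
      rw [hzero] at hforall
      exact lt_irrefl _ hforall
    obtain ⟨t₂, ht₂, hmt₂⟩ := step1
    have φcont : Continuous fun t => ⟪m, x' t⟫ := continuous_const.inner contx'
    -- key inner product identity
    have hzkey : ∀ t, ⟪m, x' t⟫ = 0 → ⟪x' t, p⟫ + ⟪x' t, q⟫ = 0 := by
      intro t hzt
      have : p + q = ‖p + q‖ • m := by
        rw [hm, smul_smul, mul_inv_cancel₀ hnpq, one_smul]
      have h2 : ⟪x' t, p + q⟫ = 0 := by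
        rw [this, real_inner_smul_right, real_inner_comm]
        rw [hzt, mul_zero]
      rw [← inner_add_right]
      exact h2
    rcases le_total t₂ t₁ with hcase | hcase
    · -- zero of φ in [0, t₂] ⊆ [0, t₁]
      have hIVT2 : (0:ℝ) ∈ (fun t => ⟪m, x' t⟫) '' Icc 0 t₂ := by
        apply intermediate_value_Icc' ht₂.1 φcont.continuousOn
        constructor
        · exact hmt₂
        · rw [real_inner_comm] at hpm; exact hpm.le
      obtain ⟨ts, hts, hφts⟩ := hIVT2
      have hkey := hzkey ts hφts
      have A1 := lemA 0 ts hts.1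
      have A2 := lemA ts t₁ (hts.2.trans hcase)
      have harc : Real.arccos ⟪x' ts, q⟫ = π - Real.arccos ⟪x' ts, p⟫ := by
        have : ⟪x' ts, q⟫ = -⟪x' ts, p⟫ := by linarith
        rw [this, Real.arccos_neg]
      have hcomm : ⟪x' 0, x' ts⟫ = ⟪x' ts, p⟫ := real_inner_comm _ _
      rw [hcomm] at A1
      have A2' : π - Real.arccos ⟪x' ts, p⟫ ≤ ∫ u in ts..t₁, ‖x'' u‖ := by
        rw [← harc]; exact A2
      have htotal : (∫ u in (0:ℝ)..ts, ‖x'' u‖) + (∫ u in ts..t₁, ‖x'' u‖) = F t₁ :=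
        hsplit 0 ts t₁
      have hπ : π ≤ F t₁ := by linarith
      have hrest : F t₁ = κ / 2 := hFt₁
      linarith
    · -- zero of φ in [t₁, t₂]
      have hIVT2 : (0:ℝ) ∈ (fun t => ⟪m, x' t⟫) '' Icc t₁ t₂ := by
        apply intermediate_value_Icc' hcase φcont.continuousOn
        constructor
        · exact hmt₂
        · rw [real_inner_comm] at hqm; exact hqm.le
      obtain ⟨ts, hts, hφts⟩ := hIVT2
      have hkey := hzkey ts hφts
      have A1 := lemA t₁ ts hts.1
      have A2 := lemA ts L (hts.2.trans ht₂.2)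
      have harc : Real.arccos ⟪x' ts, p⟫ = π - Real.arccos ⟪x' ts, q⟫ := by
        have : ⟪x' ts, p⟫ = -⟪x' ts, q⟫ := by linarith
        rw [this, Real.arccos_neg]
      have hcomm : ⟪x' t₁, x' ts⟫ = ⟪x' ts, q⟫ := real_inner_comm _ _
      rw [hcomm] at A1
      have hcomm2 : ⟪x' ts, x' L⟫ = ⟪x' ts, p⟫ := by rw [hx'L]
      rw [hcomm2, harc] at A2
      have htotal : (∫ u in t₁..ts, ‖x'' u‖) + (∫ u in ts..L, ‖x'' u‖)
          = ∫ u in t₁..L, ‖x'' u‖ := hsplit t₁ ts L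
      have htot2 : F t₁ + (∫ u in t₁..L, ‖x'' u‖) = κ := hsplit 0 t₁ L
      have hπ : π ≤ ∫ u in t₁..L, ‖x'' u‖ := by linarith
      have hrest : F t₁ = κ / 2 := hFt₁
      linarith
end F2

/-- Main theorem (assembled form): let `K` be a C² closed unit-speed curve of
length `L` with thickness radius `1` (so pointwise curvature `≤ 1` and points
at arclength distance `≥ π` are at distance `≥ 2`) and total curvature `κ`.
Assuming the near bound (i) and the far/illumination bound (ii), the average
crossing number satisfies
`acn(K) ≤ (1/4π)(c₂ + b₁/(2π) + c₁/(2π))·L·κ`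
with `b₁ = (2π)(π/4)(π/2)²`, `c₁ = 16`, `c₂ = 43`. -/
theorem acn_le_ropelength_mul_curvature
    (L : ℝ) (hL : 0 < L)
    (x x' x'' : ℝ → EuclideanSpace ℝ (Fin 3))
    (hperiodic : ∀ s, x (s + L) = x s)
    (hd1 : ∀ s, HasDerivAt x (x' s) s)
    (hd2 : ∀ s, HasDerivAt x' (x'' s) s)
    (hcont : Continuous x'')
    (hunit : ∀ s, ‖x' s‖ = 1)
    -- consequences of thickness radius `R(K) = 1`:
    (hcurv : ∀ s, ‖x'' s‖ ≤ 1)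
    (hthick : ∀ s ∈ Icc (0:ℝ) L, ∀ t ∈ Icc (0:ℝ) L,
      π ≤ min |s - t| (L - |s - t|) → 2 ≤ ‖x s - x t‖)
    -- (i) near bound:
    (hnear : ∀ s ∈ Icc (0:ℝ) L,
      (∫ t in {t : ℝ | t ∈ Icc (0:ℝ) L ∧ min |s - t| (L - |s - t|) ≤ π},
          |tripleProduct (x' s) (x' t) (x s - x t)| / ‖x s - x t‖ ^ 3)
        ≤ (2 * π) * (π / 4) * (π / 2) ^ 2)
    -- (ii) far/illumination bound:
    (hfar : ∀ s ∈ Icc (0:ℝ) L,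
      (∫ t in {t : ℝ | t ∈ Icc (0:ℝ) L ∧ π ≤ min |s - t| (L - |s - t|)},
          1 / ‖x s - x t‖ ^ 2)
        ≤ 16 + 43 * ∫ u in (0:ℝ)..L, ‖x'' u‖) :
    (1 / (4 * π)) * (∫ s in (0:ℝ)..L, ∫ t in (0:ℝ)..L,
        |tripleProduct (x' s) (x' t) (x s - x t)| / ‖x s - x t‖ ^ 3)
      ≤ (1 / (4 * π))
          * (43 + ((2 * π) * (π / 4) * (π / 2) ^ 2) / (2 * π) + 16 / (2 * π))
          * L * ∫ u in (0:ℝ)..L, ‖x'' u‖ := by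
  have hπ : (0:ℝ) < π := Real.pi_pos
  set κ := ∫ u in (0:ℝ)..L, ‖x'' u‖ with hκdef
  have κnn : 0 ≤ κ :=
    intervalIntegral.integral_nonneg hL.le (fun u _ => norm_nonneg _)
  have hκ : 2 * π ≤ κ :=
    fenchel x x' x'' L hL hperiodic hd1 hd2 hcont hunit hcurv
  set b₁ : ℝ := (2 * π) * (π / 4) * (π / 2) ^ 2 with hb₁def
  have hb₁0 : 0 ≤ b₁ := by rw [hb₁def]; positivity
  have contx : Continuous x :=
    continuous_iff_continuousAt.2 fun t => (hd1 t).continuousAt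
  have contx' : Continuous x' :=
    continuous_iff_continuousAt.2 fun t => (hd2 t).continuousAt
  set f : ℝ → ℝ → ℝ := fun s t =>
    |tripleProduct (x' s) (x' t) (x s - x t)| / ‖x s - x t‖ ^ 3 with hfdef
  have hf0 : ∀ s t, 0 ≤ f s t := fun s t => div_nonneg (abs_nonneg _) (by positivity)
  -- the inner bound
  have hinner : ∀ s ∈ Icc (0:ℝ) L, (∫ t in (0:ℝ)..L, f s t) ≤ b₁ + (16 + 43 * κ) := by
    intro s hs
    rw [intervalIntegral.integral_of_le hL.le]
    by_cases hint : IntegrableOn (fun t => f s t) (Ioc 0 L) volume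
    · have hgc : Continuous fun t : ℝ => min |s - t| (L - |s - t|) :=
        ((continuous_const.sub continuous_id).abs).min
          (continuous_const.sub (continuous_const.sub continuous_id).abs)
      set A : Set ℝ := {t : ℝ | t ∈ Icc (0:ℝ) L ∧ min |s - t| (L - |s - t|) ≤ π} with hAdef
      set B : Set ℝ := {t : ℝ | t ∈ Icc (0:ℝ) L ∧ π ≤ min |s - t| (L - |s - t|)} with hBdef
      have hA : MeasurableSet A :=
        measurableSet_Icc.inter (measurableSet_le hgc.measurable measurable_const)
      have hB : MeasurableSet B :=
        measurableSet_Icc.inter (measurableSet_le measurable_const hgc.measurable)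
      have hsubA : A ⊆ Icc 0 L := fun t ht => ht.1
      have hsubB : B ⊆ Icc 0 L := fun t ht => ht.1
      have hsub : Ioc 0 L ⊆ A ∪ B := by
        intro t ht
        rcases le_total (min |s - t| (L - |s - t|)) π with h | h
        · exact Or.inl ⟨Ioc_subset_Icc_self ht, h⟩
        · exact Or.inr ⟨Ioc_subset_Icc_self ht, h⟩
      have hIcc : IntegrableOn (fun t => f s t) (Icc 0 L) volume :=
        hint.congr_set_ae Ioc_ae_eq_Icc.symm
      have hUnionInt : IntegrableOn (fun t => f s t) (A ∪ B) volume :=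
        hIcc.mono_set (union_subset hsubA hsubB)
      have h1 : (∫ t in Ioc 0 L, f s t) ≤ ∫ t in A ∪ B, f s t :=
        setIntegral_mono_set hUnionInt
          (Filter.Eventually.of_forall (fun t => hf0 s t))
          (HasSubset.Subset.eventuallyLE hsub)
      have hAint : IntegrableOn (fun t => f s t) A volume := hIcc.mono_set hsubA
      have hBint : IntegrableOn (fun t => f s t) B volume := hIcc.mono_set hsubB
      have h2 : (∫ t in A ∪ B, f s t) ≤ (∫ t in A, f s t) + ∫ t in B, f s t := by
        have hun : A ∪ B = A ∪ (B \ A) := (Set.union_diff_self).symm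
        rw [hun, setIntegral_union disjoint_sdiff_self_right (hB.diff hA) hAint
          (hBint.mono_set diff_subset)]
        have h3 : (∫ t in B \ A, f s t) ≤ ∫ t in B, f s t :=
          setIntegral_mono_set hBint (Filter.Eventually.of_forall (fun t => hf0 s t))
            (HasSubset.Subset.eventuallyLE diff_subset)
        linarith
      have h3 : (∫ t in A, f s t) ≤ b₁ := hnear s hs
      have h4 : (∫ t in B, f s t) ≤ 16 + 43 * κ := by
        have hdom : IntegrableOn (fun t => 1 / ‖x s - x t‖ ^ 2) B volume := by
          apply Integrable.mono' (g := fun _ => (1:ℝ)/4)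
          · refine integrableOn_const (ne_of_lt ?_)
            refine lt_of_le_of_lt (measure_mono hsubB) ?_
            rw [Real.volume_Icc]
            exact ENNReal.ofReal_lt_top
          · exact (measurable_const.div
              (((continuous_const.sub contx).norm.pow 2).measurable)).aestronglyMeasurable
          · refine (ae_restrict_iff' hB).2 (Filter.Eventually.of_forall fun t ht => ?_)
            have h2n : 2 ≤ ‖x s - x t‖ := hthick s hs t ht.1 ht.2
            have hn0 : (0:ℝ) < ‖x s - x t‖ ^ 2 := by positivity
            have hb : (4:ℝ) ≤ ‖x s - x t‖ ^ 2 := by nlinarith [h2n]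
            rw [Real.norm_eq_abs, abs_of_nonneg (by positivity : (0:ℝ) ≤ 1 / ‖x s - x t‖ ^ 2)]
            rw [div_le_div_iff₀ hn0 (by norm_num : (0:ℝ) < 4)]
            linarith
        have hpt : ∀ t ∈ B, f s t ≤ 1 / ‖x s - x t‖ ^ 2 := by
          intro t ht
          have h2n : 2 ≤ ‖x s - x t‖ := hthick s hs t ht.1 ht.2
          have hn0 : (0:ℝ) < ‖x s - x t‖ := by linarith
          have htrip : |tripleProduct (x' s) (x' t) (x s - x t)| ≤ ‖x s - x t‖ :=
            abs_tripleProduct_le' (x' s) (x' t) (x s - x t) (hunit s) (hunit t)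
          have hstep : f s t ≤ ‖x s - x t‖ / ‖x s - x t‖ ^ 3 := by
            rw [hfdef]
            exact div_le_div_of_nonneg_right htrip (by positivity)
          have heq : ‖x s - x t‖ / ‖x s - x t‖ ^ 3 = 1 / ‖x s - x t‖ ^ 2 := by
            field_simp
          rw [heq] at hstep
          exact hstep
        calc (∫ t in B, f s t) ≤ ∫ t in B, 1 / ‖x s - x t‖ ^ 2 :=
              setIntegral_mono_on hBint hdom hB hpt
        _ ≤ 16 + 43 * κ := hfar s hs
      linarith
    · rw [MeasureTheory.integral_undef hint]
      positivity
  -- the outer bound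
  have houter : (∫ s in (0:ℝ)..L, ∫ t in (0:ℝ)..L, f s t) ≤ (b₁ + (16 + 43 * κ)) * L := by
    rw [intervalIntegral.integral_of_le hL.le]
    set g : ℝ → ℝ := fun s => ∫ t in (0:ℝ)..L, f s t with hgdef
    by_cases hint : IntegrableOn g (Ioc 0 L) volume
    · have hconst : IntegrableOn (fun _ : ℝ => b₁ + (16 + 43 * κ)) (Ioc 0 L) volume := by
        refine integrableOn_const (ne_of_lt ?_)
        rw [Real.volume_Ioc]
        exact ENNReal.ofReal_lt_top
      have := setIntegral_mono_on hint hconst measurableSet_Ioc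
        (fun t ht => hinner t (Ioc_subset_Icc_self ht))
      rw [setIntegral_const] at this
      rw [Real.volume_real_Ioc_of_le hL.le, sub_zero, smul_eq_mul] at this
      linarith
    · rw [MeasureTheory.integral_undef hint]
      positivity
  -- final arithmetic
  have h4π : (0:ℝ) < 1 / (4 * π) := by positivity
  have hdiv : b₁ + 16 ≤ (b₁ + 16) * κ / (2 * π) := by
    rw [le_div_iff₀ (by positivity)]
    nlinarith [hκ, hb₁0]
  have hfinal : (b₁ + (16 + 43 * κ)) * L
      ≤ (43 + b₁ / (2 * π) + 16 / (2 * π)) * L * κ := by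
    have hexp : (43 + b₁ / (2 * π) + 16 / (2 * π)) * L * κ
        = 43 * L * κ + ((b₁ + 16) * κ / (2 * π)) * L := by
      field_simp
      ring
    rw [hexp]
    nlinarith [mul_le_mul_of_nonneg_right hdiv hL.le, hL.le, κnn]
  calc (1 / (4 * π)) * (∫ s in (0:ℝ)..L, ∫ t in (0:ℝ)..L, f s t)
      ≤ (1 / (4 * π)) * ((b₁ + (16 + 43 * κ)) * L) :=
        mul_le_mul_of_nonneg_left houter h4π.le
  _ ≤ (1 / (4 * π)) * ((43 + b₁ / (2 * π) + 16 / (2 * π)) * L * κ) :=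
        mul_le_mul_of_nonneg_left hfinal h4π.le
  _ = (1 / (4 * π)) * (43 + b₁ / (2 * π) + 16 / (2 * π)) * L * κ := by ring
end
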